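/- arXiv:math/0407502 — 3 statements merged into one kernel-verified Lean document; each statement's English description precedes it below -/
import Mathlib

section
/- Let n ≥ 2, R₀ > 0, λ > 0, V : ℝⁿ → ℝ smooth with support contained in the closed ball B(0,R₀), and θ₀, ω₀ unit vectors in ℝⁿ. Suppose for each z in the hyperplane θ₀^⊥ = {z : ⟨z,θ₀⟩ = 0} there is a twice continuously differentiable curve x_z : ℝ → ℝⁿ with ẍ_z(t) = −∇V(x_z(t)) for all t, x_z(0) = z − R₀θ₀, ẋ_z(0) = √(2λ)θ₀. Suppose ξ∞ : θ₀^⊥ → ℝⁿ is differentiable and satisfies: for every z there is T such that ẋ_z(t) = √(2λ) ξ∞(z) for all t ≥ T. If ω₀ is regular for θ₀, meaning that for every z ∈ θ₀^⊥ with ξ∞(z) = ω₀ the Fréchet derivative of ξ∞ at z (as a linear map on θ₀^⊥) is injective, then θ₀ ≠ ω₀. -/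
set_option maxHeartbeats 2000000


open Metric Set
open scoped RealInnerProductSpace

/-- If the final direction `ω₀` is regular (non-degenerate) for the initial direction `θ₀`,
i.e. the Fréchet derivative of the final-direction map `ξ∞ : θ₀^⊥ → ℝⁿ` is injective at
every impact parameter `z` with `ξ∞(z) = ω₀`, then `θ₀ ≠ ω₀`. -/
theorem statement4 (n : ℕ) (hn : 2 ≤ n) (R₀ lam : ℝ) (hR₀ : 0 < R₀) (hlam : 0 < lam)
    (V : EuclideanSpace ℝ (Fin n) → ℝ) (hV : ContDiff ℝ (⊤ : ℕ∞) V)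
    (hVsupp : tsupport V ⊆ Metric.closedBall 0 R₀)
    (θ₀ ω₀ : EuclideanSpace ℝ (Fin n)) (hθ₀ : ‖θ₀‖ = 1) (hω₀ : ‖ω₀‖ = 1)
    (x : ↥((Submodule.span ℝ {θ₀})ᗮ) → ℝ → EuclideanSpace ℝ (Fin n))
    (hx : ∀ z, ContDiff ℝ 2 (x z))
    (hNewton : ∀ z, ∀ t : ℝ, deriv (deriv (x z)) t = -gradient V (x z t))
    (hx0 : ∀ z, x z 0 = (z : EuclideanSpace ℝ (Fin n)) - R₀ • θ₀)
    (hv0 : ∀ z, deriv (x z) 0 = Real.sqrt (2 * lam) • θ₀)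
    (ξ : ↥((Submodule.span ℝ {θ₀})ᗮ) → EuclideanSpace ℝ (Fin n))
    (hξdiff : Differentiable ℝ ξ)
    (hξ : ∀ z, ∃ T : ℝ, ∀ t ≥ T, deriv (x z) t = Real.sqrt (2 * lam) • ξ z)
    (hreg : ∀ z, ξ z = ω₀ → Function.Injective (fderiv ℝ ξ z)) :
    θ₀ ≠ ω₀ := by
  set c := Real.sqrt (2 * lam) with hcdef
  have hcpos : 0 < c := Real.sqrt_pos.2 (by linarith)
  -- the gradient of V vanishes outside the ball of radius R₀
  have hgrad : ∀ y : EuclideanSpace ℝ (Fin n), R₀ < ‖y‖ → gradient V y = 0 := by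
    intro y hy
    have hy' : y ∉ tsupport V := by
      intro h
      have := hVsupp h
      rw [Metric.mem_closedBall, dist_zero_right] at this
      linarith
    have hev : V =ᶠ[nhds y] 0 := by
      filter_upwards [(isClosed_tsupport V).isOpen_compl.mem_nhds hy'] with u hu
      exact image_eq_zero_of_notMem_tsupport hu
    have hfd : fderiv ℝ V y = 0 := by
      rw [hev.fderiv_eq, show (0 : EuclideanSpace ℝ (Fin n) → ℝ) = fun _ => 0 from rfl, fderiv_fun_const]; rfl
    simp [gradient, hfd]
  -- main claim: for impact parameters outside the ball, the trajectory is a straight line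
  have key : ∀ z : ↥((Submodule.span ℝ {θ₀})ᗮ), R₀ < ‖(z : EuclideanSpace ℝ (Fin n))‖ → ξ z = θ₀ := by
    intro z hz
    set v : EuclideanSpace ℝ (Fin n) := c • θ₀ with hvdef
    set L : ℝ → EuclideanSpace ℝ (Fin n) := fun t => ((z : EuclideanSpace ℝ (Fin n)) - R₀ • θ₀) + t • v with hLdef
    have hLderiv : ∀ t : ℝ, HasDerivAt L v t := by
      intro t
      have : HasDerivAt (fun s : ℝ => s • v) v t := by
        simpa using (hasDerivAt_id t).smul_const v
      simpa [hLdef] using this.const_add ((z : EuclideanSpace ℝ (Fin n)) - R₀ • θ₀)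
    have hLcont : Continuous L := by
      exact continuous_const.add (continuous_id.smul continuous_const)
    -- inner product of z with θ₀ vanishes
    have hzθ : ⟪(z : EuclideanSpace ℝ (Fin n)), θ₀⟫ = 0 := by
      have := z.2
      rw [Submodule.mem_orthogonal] at this
      rw [real_inner_comm]
      exact this θ₀ (Submodule.mem_span_singleton_self θ₀)
    -- L stays outside the ball
    have hLnorm : ∀ t : ℝ, R₀ < ‖L t‖ := by
      intro t
      have hform : L t = (z : EuclideanSpace ℝ (Fin n)) + (t * c - R₀) • θ₀ := by
        simp [hLdef, hvdef, sub_smul, smul_smul]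
        abel
      have hsq : ‖L t‖ ^ 2 = ‖(z : EuclideanSpace ℝ (Fin n))‖ ^ 2 + (t * c - R₀) ^ 2 := by
        rw [hform, norm_add_sq_real, real_inner_smul_right, hzθ, norm_smul, hθ₀]
        simp only [Real.norm_eq_abs, mul_one, mul_zero, sq_abs]
        ring
      have h1 : R₀ ^ 2 < ‖L t‖ ^ 2 := by
        have : R₀ ^ 2 < ‖(z : EuclideanSpace ℝ (Fin n))‖ ^ 2 := by
          have := hz
          nlinarith [norm_nonneg (z : EuclideanSpace ℝ (Fin n))]
        nlinarith [sq_nonneg (t * c - R₀)]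
      nlinarith [norm_nonneg (L t), hR₀]
    have hxc : Continuous (x z) := (hx z).continuous
    have hxd : Differentiable ℝ (x z) := (hx z).differentiable (by norm_num)
    have hxd2 : Differentiable ℝ (deriv (x z)) := by
      have h2 : ContDiff ℝ (1 + 1) (x z) := by
        have h3 := hx z
        norm_num at h3 ⊢
        exact h3
      exact (contDiff_succ_iff_deriv.mp h2).2.2.differentiable (by norm_num)
    have hxdc : Continuous (deriv (x z)) := hxd2.continuous
    -- extension lemma
    have ext : ∀ T : ℝ, 0 ≤ T → (∀ s ∈ Icc (0 : ℝ) T, x z s = L s) →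
        deriv (x z) T = v → ∃ ε > 0, ∀ s ∈ Icc (0 : ℝ) (T + ε), x z s = L s := by
      intro T hT hEq hd
      have hxT : x z T = L T := hEq T ⟨hT, le_rfl⟩
      have hout : R₀ < ‖x z T‖ := by rw [hxT]; exact hLnorm T
      -- find ε such that x z stays out of the ball on [T, T+ε]
      have hopen : IsOpen {s : ℝ | R₀ < ‖x z s‖} :=
        isOpen_lt continuous_const (hxc.norm)
      obtain ⟨δ, hδpos, hδ⟩ := Metric.isOpen_iff.mp hopen T hout
      set ε := δ / 2 with hεdef
      have hεpos : 0 < ε := by positivity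
      have hsub : ∀ s ∈ Icc T (T + ε), R₀ < ‖x z s‖ := by
        intro s hs
        apply hδ
        rw [Metric.mem_ball, Real.dist_eq, abs_lt]
        constructor <;> [linarith [hs.1]; linarith [hs.2]]
      -- the velocity is constant on [T, T+ε]
      have hvel : ∀ s ∈ Icc T (T + ε), deriv (x z) s = v := by
        have hconst := constant_of_has_deriv_right_zero
          (f := deriv (x z)) (a := T) (b := T + ε)
          (hxdc.continuousOn)
          (fun s hs => by
            have : deriv (deriv (x z)) s = 0 := by
              rw [hNewton z s, hgrad _ (hsub s ⟨hs.1, hs.2.le⟩), neg_zero]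
            have h' := (hxd2 s).hasDerivAt
            rw [this] at h'
            exact h'.hasDerivWithinAt)
        intro s hs
        rw [hconst s hs, hd]
      -- hence x z = L on [T, T+ε]
      have hpos : ∀ s ∈ Icc T (T + ε), x z s = L s := by
        have hconst := constant_of_has_deriv_right_zero
          (f := fun s => x z s - L s) (a := T) (b := T + ε)
          ((hxc.sub hLcont).continuousOn)
          (fun s hs => by
            have h1 : HasDerivAt (x z) v s := by
              have := (hxd s).hasDerivAt
              rwa [hvel s ⟨hs.1, hs.2.le⟩] at this
            have := h1.sub (hLderiv s)
            rw [sub_self] at this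
            exact this.hasDerivWithinAt)
        intro s hs
        have h5 := hconst s hs
        simp only [hxT, sub_self] at h5
        exact sub_eq_zero.mp h5
      refine ⟨ε, hεpos, fun s hs => ?_⟩
      rcases le_total s T with h | h
      · exact hEq s ⟨hs.1, h⟩
      · exact hpos s ⟨h, hs.2⟩
    -- the good set
    set A : Set ℝ := {t | 0 ≤ t ∧ ∀ s ∈ Icc (0 : ℝ) t, x z s = L s} with hAdef
    have hA0 : (0 : ℝ) ∈ A := by
      refine ⟨le_rfl, fun s hs => ?_⟩
      have : s = 0 := le_antisymm hs.2 hs.1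
      subst this
      simp [hx0 z, hLdef]
    have hAne : A.Nonempty := ⟨0, hA0⟩
    have hnotbdd : ¬ BddAbove A := by
      intro hbdd
      set T := sSup A with hTdef
      have hT0 : 0 ≤ T := le_csSup hbdd hA0
      have hEqlt : ∀ s, 0 ≤ s → s < T → x z s = L s := by
        intro s hs0 hsT
        obtain ⟨t, htA, hst⟩ := exists_lt_of_lt_csSup hAne hsT
        exact htA.2 s ⟨hs0, hst.le⟩
      have hEq : ∀ s ∈ Icc (0 : ℝ) T, x z s = L s := by
        rcases eq_or_lt_of_le hT0 with h | hTpos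
        · intro s hs
          have : s = 0 := le_antisymm (by rw [h]; exact hs.2) hs.1
          subst this
          simp [hx0 z, hLdef]
        · have heon : EqOn (x z) L (Ico (0 : ℝ) T) := fun s hs => hEqlt s hs.1 hs.2
          have hcl := heon.closure hxc hLcont
          rw [closure_Ico hTpos.ne] at hcl
          exact fun s hs => hcl hs
      have hd : deriv (x z) T = v := by
        rcases eq_or_lt_of_le hT0 with h | hTpos
        · rw [← h]; exact hv0 z
        · -- deriv (x z) = v on Ioo 0 T, hence at T by continuity
          have heon : EqOn (deriv (x z)) (fun _ => v) (Ioo (0 : ℝ) T) := by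
            intro s hs
            have hloc : x z =ᶠ[nhds s] L := by
              have : Ioo (0 : ℝ) T ∈ nhds s := isOpen_Ioo.mem_nhds hs
              filter_upwards [this] with u hu
              exact hEq u ⟨hu.1.le, hu.2.le⟩
            rw [hloc.deriv_eq]
            exact (hLderiv s).deriv
          have hcl := heon.closure hxdc continuous_const
          rw [closure_Ioo hTpos.ne] at hcl
          exact hcl ⟨hT0, le_rfl⟩
      obtain ⟨ε, hεpos, hext⟩ := ext T hT0 hEq hd
      have : T + ε ∈ A := ⟨by linarith, hext⟩
      have := le_csSup hbdd this
      linarith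
    have hline : ∀ t : ℝ, 0 ≤ t → x z t = L t := by
      intro t ht
      obtain ⟨t', ht'A, htt'⟩ := not_bddAbove_iff.mp hnotbdd t
      exact ht'A.2 t ⟨ht, htt'.le⟩
    -- conclude ξ z = θ₀
    obtain ⟨T, hT⟩ := hξ z
    set t₀ := max T 1 with ht₀def
    have ht₀pos : (0 : ℝ) < t₀ := lt_of_lt_of_le one_pos (le_max_right T 1)
    have hloc : x z =ᶠ[nhds t₀] L := by
      filter_upwards [isOpen_Ioi.mem_nhds (show (0:ℝ) < t₀ from ht₀pos)] with u hu
      exact hline u (le_of_lt hu)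
    have hd1 : deriv (x z) t₀ = v := by
      rw [hloc.deriv_eq]
      exact (hLderiv t₀).deriv
    have hd2 := hT t₀ (le_max_left T 1)
    rw [hd1] at hd2
    have : c • θ₀ = c • ξ z := hd2
    exact (smul_right_injective (EuclideanSpace ℝ (Fin n)) hcpos.ne' this).symm
  -- now the regularity hypothesis forces θ₀ ≠ ω₀
  intro hcontra
  -- find a nonzero element of the orthogonal complement
  have hex : ∃ w : ↥((Submodule.span ℝ {θ₀})ᗮ), w ≠ 0 := by
    by_contra h
    push_neg at h
    have hbot : (Submodule.span ℝ {θ₀})ᗮ = ⊥ := by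
      rw [Submodule.eq_bot_iff]
      intro y hy
      have := h ⟨y, hy⟩
      simpa using congrArg Subtype.val this
    have htop : Submodule.span ℝ {θ₀} = ⊤ :=
      Submodule.orthogonal_eq_bot_iff.mp hbot
    have hθne : θ₀ ≠ 0 := by
      intro h0; rw [h0, norm_zero] at hθ₀; norm_num at hθ₀
    have h1 : Module.finrank ℝ (Submodule.span ℝ {θ₀} : Submodule ℝ (EuclideanSpace ℝ (Fin n))) = 1 :=
      finrank_span_singleton hθne
    rw [htop] at h1
    have h2 : Module.finrank ℝ (EuclideanSpace ℝ (Fin n)) = n := by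
      simp [finrank_euclideanSpace_fin]
    rw [finrank_top, h2] at h1
    omega
  obtain ⟨w, hw⟩ := hex
  have hwnorm : (0 : ℝ) < ‖(w : EuclideanSpace ℝ (Fin n))‖ := by
    rw [norm_pos_iff]
    exact fun h => hw (Subtype.ext h)
  obtain ⟨z₀, hz₀norm⟩ : ∃ z₀ : ↥((Submodule.span ℝ {θ₀})ᗮ),
      ‖(z₀ : EuclideanSpace ℝ (Fin n))‖ = R₀ + 1 := by
    refine ⟨((R₀ + 1) / ‖(w : EuclideanSpace ℝ (Fin n))‖) • w, ?_⟩
    rw [Submodule.coe_smul, norm_smul, Real.norm_eq_abs, abs_div,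
      abs_of_nonneg (by linarith : (0:ℝ) ≤ R₀ + 1), abs_of_nonneg (norm_nonneg _)]
    field_simp
  have hz₀ : ξ z₀ = ω₀ := by
    rw [← hcontra]
    exact key z₀ (by rw [hz₀norm]; linarith)
  have hfd : fderiv ℝ ξ z₀ = 0 := by
    have hev : ξ =ᶠ[nhds z₀] fun _ => θ₀ := by
      have hopen : IsOpen {z : ↥((Submodule.span ℝ {θ₀})ᗮ) | R₀ < ‖(z : EuclideanSpace ℝ (Fin n))‖} :=
        isOpen_lt continuous_const (continuous_subtype_val.norm)
      filter_upwards [hopen.mem_nhds (by simp only [mem_setOf_eq, hz₀norm]; linarith)] with u hu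
      exact key u hu
    rw [hev.fderiv_eq]
    exact fderiv_const_apply θ₀
  have hinj := hreg z₀ hz₀
  rw [hfd] at hinj
  apply hw
  apply hinj
  simp
end

section
/- Let n ≥ 2, R₀ > 0, λ > 0, V : ℝⁿ → ℝ smooth with support contained in the closed ball B(0,R₀), and θ₀, ω₀ unit vectors in ℝⁿ. Suppose for each z in the hyperplane θ₀^⊥ = {z : ⟨z,θ₀⟩ = 0} there is a twice continuously differentiable curve x_z : ℝ → ℝⁿ with ẍ_z(t) = −∇V(x_z(t)) for all t, x_z(0) = z − R₀θ₀, ẋ_z(0) = √(2λ)θ₀. Suppose ξ∞ : θ₀^⊥ → ℝⁿ is continuously differentiable and satisfies: for every z there is T such that ẋ_z(t) = √(2λ) ξ∞(z) for all t ≥ T. If ω₀ is regular for θ₀, i.e. for every z with ξ∞(z) = ω₀ the Fréchet derivative of ξ∞ at z (as a linear map on θ₀^⊥) is injective, then the set {z ∈ θ₀^⊥ : ξ∞(z) = ω₀} is finite. -/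
open Metric Set
open scoped RealInnerProductSpace

/-- If the final direction `ω₀` is regular for the initial direction `θ₀`, i.e. the Fréchet
derivative of the C¹ final-direction map `ξ∞ : θ₀^⊥ → ℝⁿ` is injective at every impact
parameter `z` with `ξ∞(z) = ω₀`, then the set of such impact parameters is finite. -/
theorem statement5 (n : ℕ) (hn : 2 ≤ n) (R₀ lam : ℝ) (hR₀ : 0 < R₀) (hlam : 0 < lam)
    (V : EuclideanSpace ℝ (Fin n) → ℝ) (hV : ContDiff ℝ (⊤ : ℕ∞) V)
    (hVsupp : tsupport V ⊆ Metric.closedBall 0 R₀)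
    (θ₀ ω₀ : EuclideanSpace ℝ (Fin n)) (hθ₀ : ‖θ₀‖ = 1) (hω₀ : ‖ω₀‖ = 1)
    (x : ↥((Submodule.span ℝ {θ₀})ᗮ) → ℝ → EuclideanSpace ℝ (Fin n))
    (hx : ∀ z, ContDiff ℝ 2 (x z))
    (hNewton : ∀ z, ∀ t : ℝ, deriv (deriv (x z)) t = -gradient V (x z t))
    (hx0 : ∀ z, x z 0 = (z : EuclideanSpace ℝ (Fin n)) - R₀ • θ₀)
    (hv0 : ∀ z, deriv (x z) 0 = Real.sqrt (2 * lam) • θ₀)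
    (ξ : ↥((Submodule.span ℝ {θ₀})ᗮ) → EuclideanSpace ℝ (Fin n))
    (hξdiff : ContDiff ℝ 1 ξ)
    (hξ : ∀ z, ∃ T : ℝ, ∀ t ≥ T, deriv (x z) t = Real.sqrt (2 * lam) • ξ z)
    (hreg : ∀ z, ξ z = ω₀ → Function.Injective (fderiv ℝ ξ z)) :
    {z : ↥((Submodule.span ℝ {θ₀})ᗮ) | ξ z = ω₀}.Finite := by
  set c := Real.sqrt (2 * lam) with hcdef
  have hc : 0 < c := Real.sqrt_pos.mpr (by linarith)
  have hθ0 : θ₀ ≠ 0 := by intro h; rw [h, norm_zero] at hθ₀; norm_num at hθ₀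
  -- gradient vanishes off the ball
  have gradzero : ∀ y : EuclideanSpace ℝ (Fin n), R₀ < ‖y‖ → gradient V y = 0 := by
    intro y hy
    have hns : y ∉ tsupport V := by
      intro hmem
      have := hVsupp hmem
      rw [Metric.mem_closedBall, dist_zero_right] at this
      linarith
    rw [gradient, fderiv_of_notMem_tsupport ℝ hns, map_zero]
  -- norm estimate along the free line
  have normbig : ∀ z : ((Submodule.span ℝ {θ₀})ᗮ), R₀ < ‖(z : EuclideanSpace ℝ (Fin n))‖ → ∀ a : ℝ, R₀ < ‖(z : EuclideanSpace ℝ (Fin n)) + a • θ₀‖ := by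
    intro z hz a
    have hperp : ⟪θ₀, (z : EuclideanSpace ℝ (Fin n))⟫ = 0 :=
      z.2 θ₀ (Submodule.mem_span_singleton_self θ₀)
    have hperp' : ⟪(z : EuclideanSpace ℝ (Fin n)), a • θ₀⟫ = 0 := by
      rw [real_inner_smul_right, real_inner_comm, hperp, mul_zero]
    have hsq : ‖(z : EuclideanSpace ℝ (Fin n)) + a • θ₀‖ ^ 2 = ‖(z : EuclideanSpace ℝ (Fin n))‖ ^ 2 + ‖a • θ₀‖ ^ 2 := by
      rw [norm_add_sq_real, hperp']; ring
    have h1 : R₀ ^ 2 < ‖(z : EuclideanSpace ℝ (Fin n)) + a • θ₀‖ ^ 2 := by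
      rw [hsq]
      have : 0 ≤ ‖a • θ₀‖ ^ 2 := sq_nonneg _
      nlinarith [norm_nonneg (z : EuclideanSpace ℝ (Fin n))]
    exact lt_of_pow_lt_pow_left₀ 2 (norm_nonneg _) h1
  -- far trajectories are free
  have far : ∀ z : ((Submodule.span ℝ {θ₀})ᗮ), R₀ < ‖(z : EuclideanSpace ℝ (Fin n))‖ → ξ z = θ₀ := by
    intro z hz
    have hx2 := hx z
    rw [show (2 : WithTop ℕ∞) = 1 + 1 from rfl, contDiff_succ_iff_deriv] at hx2
    obtain ⟨hxdiff, -, hx1⟩ := hx2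
    set v : EuclideanSpace ℝ (Fin n) := c • θ₀ with hvdef
    set S : Set ℝ := {t | x z t = x z 0 + t • v ∧ deriv (x z) t = v} with hSdef
    have hline : ∀ t : ℝ, x z 0 + t • v = (z : EuclideanSpace ℝ (Fin n)) + (t * c - R₀) • θ₀ := by
      intro t
      rw [hx0 z, hvdef, smul_smul, sub_smul, mul_comm]
      abel
    have h0S : (0 : ℝ) ∈ S := by
      constructor
      · simp
      · rw [hv0 z]
    have hSclosed : IsClosed S := by
      apply IsClosed.inter
      · exact isClosed_eq (hx z).continuous (continuous_const.add (continuous_id.smul continuous_const))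
      · exact isClosed_eq ((hx z).continuous_deriv one_le_two) continuous_const
    have hSopen : IsOpen S := by
      rw [Metric.isOpen_iff]
      intro t₀ ht₀
      have hxt₀ : R₀ < ‖x z t₀‖ := by
        rw [ht₀.1, hline]; exact normbig z hz _
      -- find a ball where the trajectory stays outside the support
      have hU : IsOpen {t : ℝ | R₀ < ‖x z t‖} :=
        isOpen_lt continuous_const ((hx z).continuous.norm)
      obtain ⟨ε, hε, hball⟩ := Metric.isOpen_iff.1 hU t₀ hxt₀
      refine ⟨ε, hε, ?_⟩
      have hdd : ∀ s ∈ Metric.ball t₀ ε, deriv (deriv (x z)) s = 0 := by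
        intro s hs
        rw [hNewton z s, gradzero _ (hball hs), neg_zero]
      -- deriv (x z) is constant on the ball
      have hconstd : ∀ s ∈ Metric.ball t₀ ε, deriv (x z) s = deriv (x z) t₀ := by
        intro s hs
        apply (convex_ball t₀ ε).is_const_of_fderivWithin_eq_zero
          (hx1.differentiable one_ne_zero).differentiableOn _ hs (Metric.mem_ball_self hε)
        intro u hu
        rw [fderivWithin_of_isOpen Metric.isOpen_ball hu]
        refine ContinuousLinearMap.ext_ring ?_
        rw [fderiv_apply_one_eq_deriv, hdd u hu, ContinuousLinearMap.zero_apply]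
      intro s hs
      have hds : deriv (x z) s = v := by rw [hconstd s hs, ht₀.2]
      have hsmul : ∀ u : ℝ, HasDerivAt (fun t : ℝ => t • v) v u := by
        intro u
        simpa using (hasDerivAt_id u).smul_const v
      constructor
      · -- x z is affine on the ball
        have hgd : ∀ u ∈ Metric.ball t₀ ε, deriv (fun t => x z t - t • v) u = 0 := by
          intro u hu
          rw [deriv_fun_sub (hxdiff u) (hsmul u).differentiableAt, hconstd u hu, ht₀.2,
            (hsmul u).deriv, sub_self]
        have hgc : (fun t => x z t - t • v) s = (fun t => x z t - t • v) t₀ := by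
          apply (convex_ball t₀ ε).is_const_of_fderivWithin_eq_zero
            (fun u _ => ((hxdiff u).sub (hsmul u).differentiableAt).differentiableWithinAt)
            _ hs (Metric.mem_ball_self hε)
          intro u hu
          rw [fderivWithin_of_isOpen Metric.isOpen_ball hu]
          refine ContinuousLinearMap.ext_ring ?_
          rw [fderiv_apply_one_eq_deriv, (by exact hgd u hu : deriv (x z - fun t => t • v) u = 0), ContinuousLinearMap.zero_apply]
        simp only at hgc
        have := ht₀.1
        rw [sub_eq_iff_eq_add] at hgc
        rw [hgc, this]
        abel
      · exact hds
    have hSuniv : S = univ := IsClopen.eq_univ ⟨hSclosed, hSopen⟩ ⟨0, h0S⟩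
    obtain ⟨T, hT⟩ := hξ z
    have hTS : T ∈ S := hSuniv ▸ mem_univ T
    have := hT T le_rfl
    rw [hTS.2] at this
    exact (smul_right_injective (EuclideanSpace ℝ (Fin n)) (ne_of_gt hc) this.symm)
  -- the orthogonal complement is nontrivial
  have hfr : 0 < Module.finrank ℝ ((Submodule.span ℝ {θ₀})ᗮ) := by
    have h1 : Module.finrank ℝ (Submodule.span ℝ {θ₀}) = 1 := finrank_span_singleton hθ0
    have h2 := Submodule.finrank_add_finrank_orthogonal (K := Submodule.span ℝ {θ₀}) (𝕜 := ℝ)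
    rw [h1, finrank_euclideanSpace_fin] at h2
    omega
  have : Nontrivial ((Submodule.span ℝ {θ₀})ᗮ) := Module.nontrivial_of_finrank_pos (R := ℝ) hfr
  obtain ⟨w, hw⟩ := exists_ne (0 : ((Submodule.span ℝ {θ₀})ᗮ))
  -- a far point
  set z₀ := ((R₀ + 1) / ‖w‖) • w with hz₀def
  have hwn : (0:ℝ) < ‖w‖ := norm_pos_iff.mpr hw
  have hz₀norm : ‖z₀‖ = R₀ + 1 := by
    rw [hz₀def, norm_smul, Real.norm_eq_abs, abs_of_pos (by positivity), div_mul_cancel₀]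
    exact ne_of_gt hwn
  have hz₀far : R₀ < ‖(z₀ : EuclideanSpace ℝ (Fin n))‖ := by
    rw [← Submodule.coe_norm, hz₀norm]; linarith
  -- case ω₀ = θ₀ is impossible
  by_cases hωθ : ω₀ = θ₀
  · exfalso
    have hWopen : IsOpen {z : ((Submodule.span ℝ {θ₀})ᗮ) | R₀ < ‖(z : EuclideanSpace ℝ (Fin n))‖} := by
      apply isOpen_lt continuous_const
      exact (continuous_subtype_val.norm)
    have hEq : ξ =ᶠ[nhds z₀] fun _ => θ₀ := by
      filter_upwards [hWopen.mem_nhds hz₀far] with z hzf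
      exact far z hzf
    have hfd : fderiv ℝ ξ z₀ = 0 := by
      rw [hEq.fderiv_eq, fderiv_fun_const]; rfl
    have hinj := hreg z₀ (by rw [far z₀ hz₀far, hωθ])
    rw [hfd] at hinj
    exact hw (hinj (by simp))
  -- main case : the fiber is compact and discrete
  set F := {z : ((Submodule.span ℝ {θ₀})ᗮ) | ξ z = ω₀} with hFdef
  have hFsub : F ⊆ Metric.closedBall 0 R₀ := by
    intro z hzF
    rw [Metric.mem_closedBall, dist_zero_right]
    by_contra hcon
    push_neg at hcon
    exact hωθ (hzF.symm.trans (far z (by rwa [Submodule.coe_norm] at hcon)))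
  have hFclosed : IsClosed F :=
    isClosed_eq hξdiff.continuous continuous_const
  have hFcompact : IsCompact F :=
    (isCompact_closedBall (0 : ((Submodule.span ℝ {θ₀})ᗮ)) R₀).of_isClosed_subset hFclosed hFsub
  -- discreteness
  have hdisc : DiscreteTopology F := by
    rw [discreteTopology_subtype_iff]
    intro z hzF
    set f' := fderiv ℝ ξ z with hf'def
    have hinj := hreg z hzF
    obtain ⟨K, hK0, hK⟩ := LinearMap.exists_antilipschitzWith (f' : ((Submodule.span ℝ {θ₀})ᗮ) →ₗ[ℝ] EuclideanSpace ℝ (Fin n))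
      (by rw [LinearMap.ker_eq_bot]; exact hinj)
    have hstrict : HasStrictFDerivAt ξ f' z :=
      hξdiff.contDiffAt.hasStrictFDerivAt one_ne_zero
    have hc0 : (0 : NNReal) < K⁻¹ / 2 := by positivity
    have hc0' : K⁻¹ / 2 < K⁻¹ := NNReal.half_lt_self (by positivity)
    obtain ⟨s, hs, happ⟩ := hstrict.approximates_deriv_on_nhds (Or.inr hc0)
    have hanti : AntilipschitzWith (K⁻¹ - K⁻¹ / 2)⁻¹ (s.restrict ξ) := by
      apply AntilipschitzWith.add_sub_lipschitzWith (hK.restrict s) _ hc0'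
      exact happ.lipschitz_sub
    have hinjOn : Set.InjOn ξ s := Set.injOn_iff_injective.2 hanti.injective
    -- conclude the fiber is isolated at z
    have hkey : (s ∩ {z}ᶜ) ∩ F = ∅ := by
      ext y
      simp only [Set.mem_inter_iff, Set.mem_compl_iff, Set.mem_singleton_iff,
        Set.mem_empty_iff_false, iff_false, not_and, and_imp]
      intro hys hyne hyF
      exact hyne (hinjOn hys (mem_of_mem_nhds hs) (by rw [hyF, hzF]))
    rw [← Filter.empty_mem_iff_bot]
    rw [← hkey]
    apply Filter.inter_mem_inf _ (Filter.mem_principal_self F)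
    exact Filter.inter_mem (mem_nhdsWithin_of_mem_nhds hs) self_mem_nhdsWithin
  exact hFcompact.finite ⟨hdisc⟩
end

section
/- Let n ≥ 2, R₀ > 0, λ > 0, V : ℝⁿ → ℝ smooth with support contained in the closed ball B(0,R₀), and θ, ω unit vectors in ℝⁿ. Let x : ℝ → ℝⁿ be twice continuously differentiable with ẍ(u) = −∇V(x(u)) for all u, and suppose there is t₀ > 0 such that: for all u ≤ 0, ẋ(u) = √(2λ)θ and ‖x(u)‖ > R₀; and for all u ≥ t₀, ẋ(u) = √(2λ)ω and ‖x(u)‖ > R₀. Fix τ and s₁ with s₁ ≥ 0 and τ − s₁ ≥ t₀, and for s ∈ [0, s₁] define the modified action S(s) = ⟨x(−s), √(2λ)θ⟩ + ∫_{−s}^{τ−s} ( ½‖ẋ(u)‖² − V(x(u)) ) du − ⟨x(τ−s), √(2λ)ω⟩ − λτ. Then S(s) = S(0) for all s ∈ [0, s₁]; i.e. the modified action along the (θ,ω)-trajectory is independent of the choice of starting point on the incoming free segment. -/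
open MeasureTheory Metric Set intervalIntegral
open scoped RealInnerProductSpace

/-- The modified action along a `(θ,ω)`-trajectory at energy `λ`,
`S(s) = ⟨x(-s), √(2λ)θ⟩ + ∫_{-s}^{τ-s} (½‖ẋ‖² - V(x)) du - ⟨x(τ-s), √(2λ)ω⟩ - λτ`,
is independent of the choice of starting point on the incoming free segment:
`S(s) = S(0)` for all `s ∈ [0, s₁]`. -/
theorem statement10 (n : ℕ) (hn : 2 ≤ n) (R₀ lam : ℝ) (hR₀ : 0 < R₀) (hlam : 0 < lam)
    (V : EuclideanSpace ℝ (Fin n) → ℝ) (hV : ContDiff ℝ (⊤ : ℕ∞) V)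
    (hVsupp : tsupport V ⊆ Metric.closedBall 0 R₀)
    (θ ω : EuclideanSpace ℝ (Fin n)) (hθ : ‖θ‖ = 1) (hω : ‖ω‖ = 1)
    (x : ℝ → EuclideanSpace ℝ (Fin n)) (hx : ContDiff ℝ 2 x)
    (hNewton : ∀ u : ℝ, deriv (deriv x) u = -gradient V (x u))
    (t₀ : ℝ) (ht₀ : 0 < t₀)
    (hin : ∀ u ≤ (0 : ℝ), deriv x u = Real.sqrt (2 * lam) • θ ∧ ‖x u‖ > R₀)
    (hout : ∀ u ≥ t₀, deriv x u = Real.sqrt (2 * lam) • ω ∧ ‖x u‖ > R₀)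
    (τ s₁ : ℝ) (hs₁ : 0 ≤ s₁) (hτ : τ - s₁ ≥ t₀)
    (S : ℝ → ℝ)
    (hS : ∀ s : ℝ, S s =
        ⟪x (-s), Real.sqrt (2 * lam) • θ⟫
        + (∫ u in (-s)..(τ - s), ((1 / 2 : ℝ) * ‖deriv x u‖ ^ 2 - V (x u)))
        - ⟪x (τ - s), Real.sqrt (2 * lam) • ω⟫ - lam * τ) :
    ∀ s ∈ Set.Icc (0 : ℝ) s₁, S s = S 0 := by
  intro s hs
  obtain ⟨hs0, hss1⟩ := hs
  have hc0 : (0:ℝ) ≤ Real.sqrt (2*lam) := Real.sqrt_nonneg _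
  have hc2 : Real.sqrt (2*lam) ^ 2 = 2 * lam := Real.sq_sqrt (by linarith)
  have hdx : Continuous (deriv x) := hx.continuous_deriv (by norm_num)
  set L : ℝ → ℝ := fun u => (1/2:ℝ) * ‖deriv x u‖ ^ 2 - V (x u) with hLdef
  have hL : Continuous L :=
    (continuous_const.mul ((hdx.norm).pow 2)).sub (hV.continuous.comp hx.continuous)
  have hVzero : ∀ u : ℝ, R₀ < ‖x u‖ → V (x u) = 0 := by
    intro u hu
    apply image_eq_zero_of_notMem_tsupport
    intro hmem
    have h2 := hVsupp hmem
    rw [Metric.mem_closedBall, dist_zero_right] at h2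
    linarith
  have hnormv : ∀ v : EuclideanSpace ℝ (Fin n), ‖v‖ = 1 →
      ‖Real.sqrt (2*lam) • v‖ ^ 2 = 2 * lam := by
    intro v hv
    rw [norm_smul, Real.norm_eq_abs, abs_of_nonneg hc0, mul_pow, hv, hc2]; ring
  -- Lagrangian equals lam on the free segments
  have hLin : Set.EqOn L (fun _ => lam) (Set.uIcc (-s) (0:ℝ)) := by
    intro u hu
    rw [Set.uIcc_of_le (by linarith : -s ≤ 0)] at hu
    obtain ⟨hd, hn⟩ := hin u hu.2
    simp only [hLdef]
    rw [hd, hnormv θ hθ, hVzero u hn]; ring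
  have hLout : Set.EqOn L (fun _ => lam) (Set.uIcc (τ - s) τ) := by
    intro u hu
    rw [Set.uIcc_of_le (by linarith : τ - s ≤ τ)] at hu
    obtain ⟨hd, hn⟩ := hout u (by linarith [hu.1])
    simp only [hLdef]
    rw [hd, hnormv ω hω, hVzero u hn]; ring
  -- displacement on the free segments via FTC
  have hdiff : ∀ u : ℝ, DifferentiableAt ℝ x u :=
    fun u => (hx.differentiable (by norm_num)).differentiableAt
  have hftc : ∀ a b : ℝ, a ≤ b → (∀ u ∈ Set.Icc a b, deriv x u = deriv x b) →
      x a = x b - (b - a) • deriv x b := by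
    intro a b hab hconst
    have h1 : ∫ u in a..b, deriv x u = x b - x a :=
      intervalIntegral.integral_deriv_eq_sub (fun u _ => hdiff u)
        (hdx.intervalIntegrable _ _)
    have h2 : ∫ u in a..b, deriv x u = (b - a) • deriv x b := by
      rw [intervalIntegral.integral_congr (g := fun _ => deriv x b)
        (by intro u hu; rw [Set.uIcc_of_le hab] at hu; exact hconst u hu),
        intervalIntegral.integral_const]
    rw [h2] at h1
    have h3 : x a + (b - a) • deriv x b = x b := by rw [h1]; abel
    exact eq_sub_of_add_eq h3
  have hd0 : deriv x 0 = Real.sqrt (2*lam) • θ := (hin 0 le_rfl).1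
  have hdτ : deriv x τ = Real.sqrt (2*lam) • ω := (hout τ (by linarith)).1
  have hx1 : x (-s) = x 0 - s • (Real.sqrt (2*lam) • θ) := by
    have := hftc (-s) 0 (by linarith)
      (fun u hu => by rw [(hin u hu.2).1, hd0])
    rw [hd0] at this; simpa using this
  have hx2 : x (τ - s) = x τ - s • (Real.sqrt (2*lam) • ω) := by
    have := hftc (τ - s) τ (by linarith)
      (fun u hu => by rw [(hout u (by linarith [hu.1])).1, hdτ])
    rw [hdτ] at this; simpa using this
  -- inner product identities
  have hinner1 : ⟪x (-s), Real.sqrt (2*lam) • θ⟫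
      = ⟪x 0, Real.sqrt (2*lam) • θ⟫ - s * (2 * lam) := by
    rw [hx1, inner_sub_left, real_inner_smul_left, real_inner_self_eq_norm_sq,
      hnormv θ hθ]
  have hinner2 : ⟪x (τ - s), Real.sqrt (2*lam) • ω⟫
      = ⟪x τ, Real.sqrt (2*lam) • ω⟫ - s * (2 * lam) := by
    rw [hx2, inner_sub_left, real_inner_smul_left, real_inner_self_eq_norm_sq,
      hnormv ω hω]
  -- integral identities
  have hIin : ∫ u in (-s)..(0:ℝ), L u = s * lam := by
    rw [intervalIntegral.integral_congr hLin, intervalIntegral.integral_const]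
    simp [smul_eq_mul]
  have hIout : ∫ u in (τ - s)..τ, L u = s * lam := by
    rw [intervalIntegral.integral_congr hLout, intervalIntegral.integral_const]
    simp [smul_eq_mul]
  have hsplit1 : (∫ u in (-s)..(0:ℝ), L u) + ∫ u in (0:ℝ)..(τ - s), L u
      = ∫ u in (-s)..(τ - s), L u :=
    intervalIntegral.integral_add_adjacent_intervals
      (hL.intervalIntegrable _ _) (hL.intervalIntegrable _ _)
  have hsplit2 : (∫ u in (0:ℝ)..(τ - s), L u) + ∫ u in (τ - s)..τ, L u
      = ∫ u in (0:ℝ)..τ, L u :=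
    intervalIntegral.integral_add_adjacent_intervals
      (hL.intervalIntegrable _ _) (hL.intervalIntegrable _ _)
  have hI : ∫ u in (-s)..(τ - s), L u = ∫ u in (0:ℝ)..τ, L u := by
    rw [← hsplit1, hIin, ← hsplit2, hIout]; ring
  have hS0 := hS 0
  simp only [neg_zero, sub_zero] at hS0
  rw [hS s, hS0]
  simp only [hLdef] at hI ⊢
  rw [hinner1, hinner2, hI]
  ring
end
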